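/- Let D be a triangulated category with partial silting object P, and set Z_P = ^{⊥_{>0}}P ∩ P^{⊥_{>0}}. The restriction of the truncation functor σ_P^{>0}: Z_P → P^{⊥_ℤ} induces a fully faithful additive functor from the ideal quotient Z_P/[P] to P^{⊥_ℤ}, where [P] is the ideal of morphisms factoring through add(P). -/

import Mathlib

open CategoryTheory Limits Pretriangulated ZeroObject

universe v u

namespace Paper

variable {C : Type u} [Category.{v} C] [Preadditive C] [HasZeroObject C]
  [HasShift C ℤ] [∀ n : ℤ, (CategoryTheory.shiftFunctor C n).Additive] [Pretriangulated C]
  [HasBinaryBiproducts C]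

/-- A class of objects closed under isomorphism. -/
def ClosedIso (P : C → Prop) : Prop := ∀ ⦃X Y : C⦄, (X ≅ Y) → P X → P Y

/-- A class of objects closed under extensions. -/
def ExtClosed (P : C → Prop) : Prop :=
  ∀ T : Triangle C, T ∈ (distTriang C) → P T.obj₁ → P T.obj₃ → P T.obj₂

/-- A suspended subcategory: additive (iso-closed, contains 0, closed under finite sums via
extensions), closed under the suspension `Σ = ⟦1⟧` and under extensions. -/
structure Suspended (P : C → Prop) : Prop where
  iso : ClosedIso P
  zero : P 0
  shift : ∀ ⦃X : C⦄, P X → P (X⟦(1:ℤ)⟧)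
  ext : ExtClosed P

/-- A t-structure `(L, G) = (D^{≤0}, D^{>0})`: Hom-orthogonality, every object is an extension,
`L` is suspended; both classes are closed under isomorphism. -/
structure IsTStr (L G : C → Prop) : Prop where
  isoL : ClosedIso L
  isoG : ClosedIso G
  zeroL : L 0
  homZero : ∀ ⦃X Y : C⦄, L X → G Y → ∀ f : X ⟶ Y, f = 0
  trunc : ∀ X : C, ∃ (A B : C) (f : A ⟶ X) (g : X ⟶ B) (h : B ⟶ A⟦(1:ℤ)⟧),
    Triangle.mk f g h ∈ (distTriang C) ∧ L A ∧ G B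
  shiftL : ∀ ⦃X : C⦄, L X → L (X⟦(1:ℤ)⟧)
  extL : ExtClosed L

/-- The right orthogonal `U^{⊥₀}` of a class of objects. -/
def rightOrth (U : C → Prop) (Y : C) : Prop := ∀ X : C, U X → ∀ f : X ⟶ Y, f = 0

/-- `Y ∈ P^{⊥_{≤ m}}`: `Hom(P, Σ^i Y) = 0` for all `i ≤ m`. -/
def perpLe (P : C) (m : ℤ) (Y : C) : Prop := ∀ i : ℤ, i ≤ m → ∀ f : P ⟶ Y⟦i⟧, f = 0

/-- `Y ∈ P^{⊥_{> m}}`: `Hom(P, Σ^i Y) = 0` for all `i > m`. -/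
def perpGt (P : C) (m : ℤ) (Y : C) : Prop := ∀ i : ℤ, m < i → ∀ f : P ⟶ Y⟦i⟧, f = 0

/-- `Y ∈ P^{⊥_ℤ}`: `Hom(P, Σ^i Y) = 0` for all integers `i`. -/
def perpZ (P : C) (Y : C) : Prop := ∀ i : ℤ, ∀ f : P ⟶ Y⟦i⟧, f = 0

/-- `X ∈ ^{⊥_{>0}}P`: `Hom(X, Σ^i P) = 0` for all `i > 0`. -/
def leftPerpGt0 (P : C) (X : C) : Prop := ∀ i : ℤ, 0 < i → ∀ f : X ⟶ P⟦i⟧, f = 0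

/-- `susp(P)`, the smallest suspended subcategory containing `P`. -/
def suspObj (P : C) (X : C) : Prop := ∀ U : C → Prop, Suspended U → U P → U X

/-- An additive subcategory closed under direct summands. -/
structure AddSub (U : C → Prop) : Prop where
  iso : ClosedIso U
  zero : U 0
  biprod : ∀ X Y : C, U X → U Y → U (X ⊞ Y)
  summand : ∀ X Y : C, U (X ⊞ Y) → U X

/-- `add(P)`: the additive closure of `P` (finite direct sums of direct summands). -/
def addObj (P : C) (X : C) : Prop := ∀ U : C → Prop, AddSub U → U P → U X

/-- A thick triangulated subcategory. -/
structure ThickSub (U : C → Prop) : Prop where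
  iso : ClosedIso U
  zero : U 0
  shift : ∀ ⦃X : C⦄, U X → ∀ n : ℤ, U (X⟦n⟧)
  ext : ExtClosed U
  summand : ∀ X Y : C, U (X ⊞ Y) → U X

/-- `thick(P)`: the smallest thick subcategory containing `P`. -/
def thickObj (P : C) (X : C) : Prop := ∀ U : C → Prop, ThickSub U → U P → U X

/-- A triangulated subcategory (iso-closed, shift-closed both ways, extension-closed). -/
structure TriangSub (U : C → Prop) : Prop where
  iso : ClosedIso U
  zero : U 0
  shift : ∀ ⦃X : C⦄, U X → ∀ n : ℤ, U (X⟦n⟧)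
  ext : ExtClosed U

/-- `P` is presilting: `Hom(P, Σ^n P) = 0` for all `n > 0`. -/
def Presilting (P : C) : Prop := ∀ n : ℤ, 0 < n → ∀ f : P ⟶ P⟦n⟧, f = 0

/-- `P` is partial silting: `(susp(P), P^{⊥_{≤0}})` is a t-structure and
`susp(P) ⊆ P^{⊥_{>0}}`. -/
def PartialSilting (P : C) : Prop :=
  IsTStr (suspObj P) (perpLe P 0) ∧ ∀ X : C, suspObj P X → perpGt P 0 X

/-- `S` is silting: partial silting with `susp(S) = S^{⊥_{>0}}`. -/
def Silting (S : C) : Prop :=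
  PartialSilting S ∧ ∀ X : C, suspObj S X ↔ perpGt S 0 X

/-- `X ∈ D^{≤ n}` for the t-structure with aisle `L`. -/
def DLe (L : C → Prop) (n : ℤ) (X : C) : Prop := L (X⟦n⟧)

/-- `X ∈ D^{> m}` for the t-structure with co-aisle `G`. -/
def DGt (G : C → Prop) (m : ℤ) (X : C) : Prop := G (X⟦m⟧)

/-- The t-structure `(L, G)` is bounded. -/
def BoundedTStr (L G : C → Prop) : Prop :=
  ∀ X : C, (∃ n : ℤ, DLe L n X) ∧ (∃ m : ℤ, DGt G m X)

/-- `H` is (a choice of) the `i`-th cohomology `H^i(X) = σ^{≤ i} σ^{> i-1} X` of `X` with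
respect to the t-structure `(L, G)`, expressed by the two truncation triangles. -/
def IsCohomAt (L G : C → Prop) (i : ℤ) (X H : C) : Prop :=
  ∃ (A B B' : C) (f : A ⟶ X) (g : X ⟶ B) (h : B ⟶ A⟦(1:ℤ)⟧)
    (f' : H ⟶ B) (g' : B ⟶ B') (h' : B' ⟶ H⟦(1:ℤ)⟧),
    Triangle.mk f g h ∈ (distTriang C) ∧ DLe L (i-1) A ∧ DGt G (i-1) B ∧
    Triangle.mk f' g' h' ∈ (distTriang C) ∧ DLe L i H ∧ DGt G i B'

/-- The heart `D^0 = D^{≤0} ∩ D^{>-1}` of the t-structure `(L, G)`. -/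
def Heart (L G : C → Prop) (X : C) : Prop := L X ∧ DGt G (-1) X

/-- A t-exact subcategory: a triangulated subcategory closed under the truncation `σ^{≤0}`
of the t-structure `(L, G)`. -/
def TExactSub (L G : C → Prop) (S : C → Prop) : Prop :=
  TriangSub S ∧
    ∀ (X A B : C) (f : A ⟶ X) (g : X ⟶ B) (h : B ⟶ A⟦(1:ℤ)⟧),
      S X → Triangle.mk f g h ∈ (distTriang C) → L A → G B → S A


/-- The class of objects `U` admits coreflections: every object has a couniversal morphism
from `U`, i.e. the inclusion of `U` admits a right adjoint. -/
def HasCoreflections (U : C → Prop) : Prop :=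
  ∀ X : C, ∃ (A : C) (ε : A ⟶ X), U A ∧
    ∀ A' : C, U A' → ∀ g : A' ⟶ X, ∃! g' : A' ⟶ A, g' ≫ ε = g

/-- `X` is a `2_S`-term object: `X ∈ add(S) * Σ add(S)`. -/
def TwoTerm (S X : C) : Prop :=
  ∃ (S₁ S₀ : C) (f : S₁ ⟶ S₀) (g : S₀ ⟶ X) (h : X ⟶ S₁⟦(1:ℤ)⟧),
    Triangle.mk f g h ∈ (distTriang C) ∧ addObj S S₁ ∧ addObj S S₀

/-- `X` is indecomposable. -/
def Indec (X : C) : Prop :=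
  ¬ IsZero X ∧ ∀ Y Z : C, (X ≅ Y ⊞ Z) → IsZero Y ∨ IsZero Z

/-- `add(A)` is contravariantly finite: every object admits a right `add(A)`-approximation. -/
def ContravFinAdd (A : C) : Prop :=
  ∀ X : C, ∃ (Q : C) (q : Q ⟶ X), addObj A Q ∧
    ∀ Q' : C, addObj A Q' → ∀ g : Q' ⟶ X, ∃ g' : Q' ⟶ Q, g' ≫ q = g

/-- `S` is a bounded silting object. -/
def BoundedSilting (S : C) : Prop :=
  Silting S ∧ BoundedTStr (suspObj S) (perpLe S 0)

/-- Hom-finiteness of `C` over a field `k`. -/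
def HomFinite (k : Type w) [Field k] [Linear k C] : Prop :=
  ∀ X Y : C, FiniteDimensional k (X ⟶ Y)

/-- The Krull–Schmidt property: every object is a finite direct sum of objects with local
endomorphism rings. -/
def KrullSchmidt : Prop :=
  ∀ X : C, ∃ l : List C, (∀ Y ∈ l, IsLocalRing (End Y)) ∧
    Nonempty (X ≅ l.foldr (· ⊞ ·) 0)

/-- A wide subcategory of the heart of the t-structure `(L, G)`: closed under isomorphisms,
extensions, kernels and cokernels (the latter two expressed via cones and cohomology). -/
structure HeartWide (L G W : C → Prop) : Prop where
  sub : ∀ ⦃X : C⦄, W X → Heart L G X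
  iso : ClosedIso W
  ext : ∀ (X Y Z : C) (f : X ⟶ Y) (g : Y ⟶ Z) (h : Z ⟶ X⟦(1:ℤ)⟧),
    W X → W Z → Heart L G Y → Triangle.mk f g h ∈ (distTriang C) → W Y
  kerCoker : ∀ (X Y Z : C) (f : X ⟶ Y) (g : Y ⟶ Z) (h : Z ⟶ X⟦(1:ℤ)⟧),
    W X → W Y → Triangle.mk f g h ∈ (distTriang C) →
    (∀ K : C, IsCohomAt L G (-1) Z K → W K) ∧ (∀ Q : C, IsCohomAt L G 0 Z Q → W Q)

/-- The subgroup of relations defining `K₀` of the thick subcategory `S`. -/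
def K0Rel (S : C → Prop) : AddSubgroup (FreeAbelianGroup C) :=
  AddSubgroup.closure
    {x | (∃ X : C, ¬ S X ∧ x = FreeAbelianGroup.of X) ∨
      ∃ T : Triangle C, T ∈ (distTriang C) ∧ S T.obj₁ ∧ S T.obj₂ ∧ S T.obj₃ ∧
        x = FreeAbelianGroup.of T.obj₂ - FreeAbelianGroup.of T.obj₁
          - FreeAbelianGroup.of T.obj₃}

/-- The Grothendieck group of the (thick) subcategory `S`. -/
abbrev K0 (S : C → Prop) := FreeAbelianGroup C ⧸ K0Rel S

/-- The class `[X]` in the Grothendieck group. -/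
def K0cls (S : C → Prop) (X : C) : K0 S :=
  QuotientAddGroup.mk (FreeAbelianGroup.of X)

/-- A `2_S`-term presilting sequence `(X₁, …, X_t)` in the ambient subcategory `Amb` with respect
to the silting object `S`, defined recursively: the last term `X` is an indecomposable `2_S`-term
presilting object, and the truncated sequence is a `2_{σ^{>0}_X T}`-term presilting sequence in
`Amb ∩ X^{⊥_ℤ}`, where `T = X ⊕ Q` is the Bongartz completion of `X`. -/
inductive PresiltSeq : (C → Prop) → C → List C → Prop
  | nil (Amb : C → Prop) (S : C) : PresiltSeq Amb S []
  | cons (Amb : C → Prop) (S X : C) (l : List C)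
      (hX : Amb X) (h2 : TwoTerm S X) (hpre : Presilting X) (hind : Indec X)
      -- Bongartz completion `T = X ⊞ Q`, via an approximation triangle `S → Q → X₀ → ΣS`
      (Q X₀ : C) (i : S ⟶ Q) (p : Q ⟶ X₀) (β : X₀ ⟶ S⟦(1:ℤ)⟧)
      (hB : Triangle.mk i p β ∈ (distTriang C)) (hX₀ : addObj X X₀)
      (happrox : ∀ X' : C, addObj X X' → ∀ g : X' ⟶ S⟦(1:ℤ)⟧, ∃ g', g' ≫ β = g)
      -- the truncation `T' = σ^{>0}_X (X ⊞ Q)`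
      (T' A : C) (f : A ⟶ X ⊞ Q) (g : X ⊞ Q ⟶ T') (h : T' ⟶ A⟦(1:ℤ)⟧)
      (hTr : Triangle.mk f g h ∈ (distTriang C)) (hA : suspObj X A) (hT' : perpLe X 0 T')
      (hrest : PresiltSeq (fun Y => Amb Y ∧ perpZ X Y) T' l) :
      PresiltSeq Amb S (l ++ [X])


/-! Fullness: a map `σ^{>0}X → σ^{>0}Y` lifts along `Y → σ^{>0}Y` because the obstruction lies in
`Hom(X, Σ σ^{≤0}Y)`, which vanishes as `X ∈ ^{⊥_{>0}}P` and `σ^{≤0}Y ∈ susp(P)`.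
Faithfulness: if `f` dies in `σ^{>0}Y`, it factors through `σ^{≤0}Y ∈ susp(P)`; by induction over
the suspended closure, every morphism from `X ∈ ^{⊥_{>0}}P` to an object of `susp(P)` factors
through `add(P)`, the extension step using `susp(P) ⊆ P^{⊥_{>0}}`. Conversely a morphism through
`add(P)` dies in `σ^{>0}Y ∈ P^{⊥_{≤0}}`, so the induced map factors through `Σ σ^{≤0}X`, which
is left orthogonal to `σ^{>0}Y`. -/

section AddIdeal

omit [HasShift C ℤ] [∀ n : ℤ, (shiftFunctor C n).Additive] [Pretriangulated C]

/-- The ideal `[P]` of morphisms factoring through `add(P)`. -/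
def InAddIdeal (P : C) {X Y : C} (f : X ⟶ Y) : Prop :=
  ∃ (Q : C) (p : X ⟶ Q) (q : Q ⟶ Y), addObj P Q ∧ p ≫ q = f

lemma addObj_self (P : C) : addObj P P := fun _ _ h => h

lemma addObj_zero (P : C) : addObj P 0 := fun _ hU _ => hU.zero

lemma addObj_biprod (P : C) {Q Q' : C} (hQ : addObj P Q) (hQ' : addObj P Q') :
    addObj P (Q ⊞ Q') := fun U hU hP => hU.biprod Q Q' (hQ U hU hP) (hQ' U hU hP)

lemma addSub_setOf_hom_eq_zero (Z : C) : AddSub (fun Q : C => ∀ f : Q ⟶ Z, f = 0) where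
  iso A B e hA f := by
    rw [← e.inv_hom_id_assoc f, hA (e.hom ≫ f), comp_zero]
  zero f := (isZero_zero C).eq_of_src f 0
  biprod A B hA hB f := biprod.hom_ext' _ _ (by simp [hA]) (by simp [hB])
  summand A B hAB f := by
    rw [← biprod.inl_desc f (0 : B ⟶ Z), hAB (biprod.desc f 0), comp_zero]

lemma hom_eq_zero_of_addObj {P Z : C} (h : ∀ f : P ⟶ Z, f = 0) {Q : C} (hQ : addObj P Q)
    (f : Q ⟶ Z) : f = 0 :=
  hQ _ (addSub_setOf_hom_eq_zero Z) h f

namespace InAddIdeal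

variable {P X Y Z : C}

lemma zero : InAddIdeal P (0 : X ⟶ Y) := ⟨0, 0, 0, addObj_zero P, by simp⟩

lemma of_addObj {Q : C} (hQ : addObj P Q) (p : X ⟶ Q) (q : Q ⟶ Y) : InAddIdeal P (p ≫ q) :=
  ⟨Q, p, q, hQ, rfl⟩

lemma comp {f : X ⟶ Y} (hf : InAddIdeal P f) (g : Y ⟶ Z) : InAddIdeal P (f ≫ g) := by
  obtain ⟨Q, p, q, hQ, rfl⟩ := hf
  simpa using of_addObj hQ p (q ≫ g)

lemma add {f f' : X ⟶ Y} (hf : InAddIdeal P f) (hf' : InAddIdeal P f') :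
    InAddIdeal P (f + f') := by
  obtain ⟨Q, p, q, hQ, rfl⟩ := hf
  obtain ⟨Q', p', q', hQ', rfl⟩ := hf'
  exact ⟨Q ⊞ Q', biprod.lift p p', biprod.desc q q', addObj_biprod P hQ hQ', by simp⟩

lemma comp_eq_zero {f : X ⟶ Y} (hf : InAddIdeal P f) {g : Y ⟶ Z}
    (hg : ∀ u : P ⟶ Z, u = 0) : f ≫ g = 0 := by
  obtain ⟨Q, p, q, hQ, rfl⟩ := hf
  rw [Category.assoc, hom_eq_zero_of_addObj hg hQ (q ≫ g), comp_zero]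

end InAddIdeal

end AddIdeal

section Orthogonality

omit [HasBinaryBiproducts C]

lemma suspended_suspObj (P : C) : Suspended (suspObj P) where
  iso _ _ e hX U hU hP := hU.iso e (hX U hU hP)
  zero _ hU _ := hU.zero
  shift _ hX U hU hP := hU.shift (hX U hU hP)
  ext T hT h₁ h₃ U hU hP := hU.ext T hT (h₁ U hU hP) (h₃ U hU hP)

omit [HasZeroObject C] [∀ n : ℤ, (shiftFunctor C n).Additive] [Pretriangulated C] in
lemma hom_eq_zero_of_perpLe {P B : C} (hB : perpLe P 0 B) (f : P ⟶ B) : f = 0 :=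
  (Preadditive.IsIso.comp_right_eq_zero _ ((shiftFunctorZero C ℤ).app B).inv).1 (hB 0 le_rfl _)

lemma suspended_setOf_hom_shift_pos_eq_zero (X : C) :
    Suspended (fun A : C => ∀ i : ℤ, 0 < i → ∀ f : X ⟶ A⟦i⟧, f = 0) where
  iso A B e hA i hi f :=
    (Preadditive.IsIso.comp_right_eq_zero _ ((shiftFunctor C i).mapIso e).inv).1 (hA i hi _)
  zero i _ f := (Functor.map_isZero _ (isZero_zero C)).eq_of_tgt f 0
  shift A hA i hi f :=
    (Preadditive.IsIso.comp_right_eq_zero _ ((shiftFunctorAdd' C 1 i (1 + i) rfl).app A).inv).1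
      (hA (1 + i) (by omega) _)
  ext T hT h₁ h₃ i hi f := by
    have hT' := Triangle.shift_distinguished T hT i
    obtain ⟨g, rfl⟩ := Triangle.coyoneda_exact₂ _ hT' f (h₃ i hi _)
    rw [h₁ i hi g]
    exact zero_comp

lemma hom_shift_pos_eq_zero_of_suspObj {P X : C} (hX : leftPerpGt0 P X) {A : C}
    (hA : suspObj P A) {i : ℤ} (hi : 0 < i) (f : X ⟶ A⟦i⟧) : f = 0 :=
  hA _ (suspended_setOf_hom_shift_pos_eq_zero X) hX i hi f

end Orthogonality

lemma inAddIdeal_of_distTriang {P X : C} (T : Triangle C) (hT : T ∈ distTriang C)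
    (hP₁ : ∀ u : P ⟶ T.obj₁⟦(1:ℤ)⟧, u = 0)
    (h₁ : ∀ v : X ⟶ T.obj₁, InAddIdeal P v) (h₃ : ∀ v : X ⟶ T.obj₃, InAddIdeal P v)
    (v : X ⟶ T.obj₂) : InAddIdeal P v := by
  obtain ⟨Q, p, q, hQ, hpq⟩ := h₃ (v ≫ T.mor₂)
  obtain ⟨q', rfl⟩ := Triangle.coyoneda_exact₃ T hT q (hom_eq_zero_of_addObj hP₁ hQ _)
  have hv : (v - p ≫ q') ≫ T.mor₂ = 0 := by
    rw [Preadditive.sub_comp, Category.assoc, hpq, sub_self]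
  obtain ⟨w, hw⟩ := Triangle.coyoneda_exact₂ T hT _ hv
  rw [← sub_add_cancel v (p ≫ q'), hw]
  exact ((h₁ w).comp T.mor₁).add (InAddIdeal.of_addObj hQ p q')

lemma inAddIdeal_of_suspObj {P : C} (hsusp : ∀ A : C, suspObj P A → perpGt P 0 A) {X : C}
    (hX : leftPerpGt0 P X) {A : C} (hA : suspObj P A) (v : X ⟶ A) : InAddIdeal P v := by
  have hU : Suspended (fun A => suspObj P A ∧ ∀ v : X ⟶ A, InAddIdeal P v) :=
    { iso := fun A B e hA => And.intro ((suspended_suspObj P).iso e hA.1) fun v => by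
        simpa using (hA.2 (v ≫ e.inv)).comp e.hom
      zero := And.intro (suspended_suspObj P).zero fun _ => by
        simpa only [(isZero_zero C).eq_of_tgt _ 0] using InAddIdeal.zero
      shift := fun A hA => And.intro ((suspended_suspObj P).shift hA.1) fun v => by
        simpa only [hom_shift_pos_eq_zero_of_suspObj hX hA.1 one_pos v] using InAddIdeal.zero
      ext := fun T hT h₁ h₃ => And.intro ((suspended_suspObj P).ext T hT h₁.1 h₃.1)
        (inAddIdeal_of_distTriang T hT (hsusp _ h₁.1 1 one_pos) h₁.2 h₃.2) }
  have hPU : suspObj P P ∧ ∀ v : X ⟶ P, InAddIdeal P v :=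
    ⟨fun _ _ h => h, fun v => by simpa using InAddIdeal.of_addObj (addObj_self P) v (𝟙 P)⟩
  exact (hA _ hU hPU).2 v

theorem statement11_general (P : C) (hP : PartialSilting P)
    (X Y : C) (hX1 : leftPerpGt0 P X)
    (AX BX : C) (fX : AX ⟶ X) (gX : X ⟶ BX) (hX' : BX ⟶ AX⟦(1:ℤ)⟧)
    (hTX : Triangle.mk fX gX hX' ∈ (distTriang C)) (hAX : suspObj P AX)
    (AY BY : C) (fY : AY ⟶ Y) (gY : Y ⟶ BY) (hY' : BY ⟶ AY⟦(1:ℤ)⟧)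
    (hTY : Triangle.mk fY gY hY' ∈ (distTriang C)) (hAY : suspObj P AY) (hBY : perpLe P 0 BY) :
    -- fullness
    (∀ g : BX ⟶ BY, ∃ f : X ⟶ Y, gX ≫ g = f ≫ gY) ∧
    -- faithfulness of the induced functor on the ideal quotient
    (∀ (f : X ⟶ Y) (g : BX ⟶ BY), gX ≫ g = f ≫ gY → g = 0 →
      ∃ (Q : C) (p : X ⟶ Q) (q : Q ⟶ Y), addObj P Q ∧ p ≫ q = f) ∧
    -- the induced functor kills the ideal `[P]`
    (∀ (f : X ⟶ Y) (g : BX ⟶ BY), gX ≫ g = f ≫ gY →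
      (∃ (Q : C) (p : X ⟶ Q) (q : Q ⟶ Y), addObj P Q ∧ p ≫ q = f) → g = 0) := by
  refine ⟨fun g => ?full, fun f g hfg hg => ?faithful, fun f g hfg hf => ?kills⟩
  case full =>
    exact Triangle.coyoneda_exact₃ _ hTY (gX ≫ g)
      (hom_shift_pos_eq_zero_of_suspObj hX1 hAY one_pos _)
  case faithful =>
    have hfgY : f ≫ gY = 0 := by rw [← hfg, hg, comp_zero]
    obtain ⟨v, rfl⟩ := Triangle.coyoneda_exact₂ _ hTY f hfgY
    exact (inAddIdeal_of_suspObj hP.2 hX1 hAY v).comp fY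
  case kills =>
    have hgXg : gX ≫ g = 0 := by
      rw [hfg]
      exact InAddIdeal.comp_eq_zero hf (hom_eq_zero_of_perpLe hBY)
    obtain ⟨u, rfl⟩ := Triangle.yoneda_exact₂ _ (rot_of_distTriang _ hTX) g hgXg
    rw [hP.1.homZero ((suspended_suspObj P).shift hAX) hBY u]
    exact comp_zero

/-- For `X, Y ∈ Z_P = ^{⊥_{>0}}P ∩ P^{⊥_{>0}}`, the truncation `σ_P^{>0}`
induces a fully faithful functor `Z_P/[P] → P^{⊥_ℤ}`: it is full, it kills precisely the
morphisms factoring through `add(P)` (faithfulness of the induced functor), and it is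
well defined on the quotient. -/
theorem statement11 (P : C) (hP : PartialSilting P)
    (X Y : C) (hX1 : leftPerpGt0 P X) (hX2 : perpGt P 0 X)
    (hY1 : leftPerpGt0 P Y) (hY2 : perpGt P 0 Y)
    (AX BX : C) (fX : AX ⟶ X) (gX : X ⟶ BX) (hX' : BX ⟶ AX⟦(1:ℤ)⟧)
    (hTX : Triangle.mk fX gX hX' ∈ (distTriang C)) (hAX : suspObj P AX) (hBX : perpLe P 0 BX)
    (AY BY : C) (fY : AY ⟶ Y) (gY : Y ⟶ BY) (hY' : BY ⟶ AY⟦(1:ℤ)⟧)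
    (hTY : Triangle.mk fY gY hY' ∈ (distTriang C)) (hAY : suspObj P AY) (hBY : perpLe P 0 BY) :
    -- fullness
    (∀ g : BX ⟶ BY, ∃ f : X ⟶ Y, gX ≫ g = f ≫ gY) ∧
    -- faithfulness of the induced functor on the ideal quotient
    (∀ (f : X ⟶ Y) (g : BX ⟶ BY), gX ≫ g = f ≫ gY → g = 0 →
      ∃ (Q : C) (p : X ⟶ Q) (q : Q ⟶ Y), addObj P Q ∧ p ≫ q = f) ∧
    -- the induced functor kills the ideal `[P]`
    (∀ (f : X ⟶ Y) (g : BX ⟶ BY), gX ≫ g = f ≫ gY →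
      (∃ (Q : C) (p : X ⟶ Q) (q : Q ⟶ Y), addObj P Q ∧ p ≫ q = f) → g = 0) :=
  statement11_general P hP X Y hX1 AX BX fX gX hX' hTX hAX AY BY fY gY hY' hTY hAY hBY

end Paper
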